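/- arXiv:1804.10352 — 8 statements merged into one kernel-verified Lean document; each statement's English description precedes it below -/
import Mathlib

section
/- Let d ∈ ℂ, d ≠ 0. If a Laurent polynomial f ∈ ℂ[z, z⁻¹] satisfies f(1/(d·z)) = f(z) for all z ∈ ℂ∖{0}, then there exists a polynomial g ∈ ℂ[x] with f(z) = g((z⁻¹−1)(1−d·z)) for all z ∈ ℂ∖{0}; conversely, any f of this form is invariant. (Lemma 2.1, q-Racah case, written in the multiplicative variable z = q^x.) -/
/-!
Taking `s` with `s ^ 2 = d` and `u = s z`, the involution becomes `u ↦ u⁻¹` and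
`η_d(z) + 1 + d = z⁻¹ + d z = s (u + u⁻¹)`. Hence `z ^ n + (d z)⁻¹ ^ n = s⁻ⁿ (uⁿ + u⁻ⁿ)` is a
Dickson polynomial in `η_d(z)`, so the symmetrization `f(z) + f(1/(d z))` of any Laurent
polynomial is a polynomial in `η_d(z)`; for invariant `f` it equals `2 f(z)`.
-/

/-- Evaluation of a Laurent polynomial `f ∈ ℂ[z, z⁻¹]` at a point `z ∈ ℂ`
(intended for `z ≠ 0`), defined by `f(z) = ∑ₙ aₙ zⁿ` with integer powers. -/
noncomputable def laurentEval (z : ℂ) (f : LaurentPolynomial ℂ) : ℂ :=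
  f.coeff.sum fun n a => a * z ^ n

open Polynomial

section QRacah

variable {K : Type*} [Field K]

def qRacahEta (d z : K) : K := (z⁻¹ - 1) * (1 - d * z)

theorem qRacahEta_one_div_mul {d : K} (hd : d ≠ 0) (z : K) :
    qRacahEta d (1 / (d * z)) = qRacahEta d z := by
  rcases eq_or_ne z 0 with rfl | hz
  · simp
  · unfold qRacahEta
    field_simp
    ring

theorem zpow_add_inv_zpow_eq_eval_dickson {u : K} (hu : u ≠ 0) (n : ℤ) :
    u ^ n + u⁻¹ ^ n = (dickson 1 (1 : K) n.natAbs).eval (u + u⁻¹) := by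
  rw [dickson_one_one_eval_add_inv u u⁻¹ (mul_inv_cancel₀ hu)]
  obtain ⟨m, rfl | rfl⟩ := Int.eq_nat_or_neg n
  · simp
  · simp [add_comm]

noncomputable def qRacahDickson (s : K) (n : ℤ) : K[X] :=
  C (s ^ (-n)) * (dickson 1 1 n.natAbs).comp (C s⁻¹ * (X + C (1 + s ^ 2)))

theorem eval_qRacahEta_qRacahDickson {s z : K} (hs : s ≠ 0) (hz : z ≠ 0) (n : ℤ) :
    (qRacahDickson s n).eval (qRacahEta (s ^ 2) z) = z ^ n + (1 / (s ^ 2 * z)) ^ n := by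
  have hu : s * z ≠ 0 := mul_ne_zero hs hz
  have heta : s⁻¹ * (qRacahEta (s ^ 2) z + (1 + s ^ 2)) = s * z + (s * z)⁻¹ := by
    unfold qRacahEta
    field_simp
    ring
  simp only [qRacahDickson, eval_mul, eval_C, eval_comp, eval_add, eval_X, heta,
    ← zpow_add_inv_zpow_eq_eval_dickson hu]
  rw [zpow_neg, ← inv_zpow, mul_add, ← mul_zpow, ← mul_zpow]
  congr 2
  · field_simp
  · field_simp

end QRacah

theorem laurentEval_add_laurentEval (z w : ℂ) (f : LaurentPolynomial ℂ) :
    laurentEval z f + laurentEval w f = f.coeff.sum fun n a => a * (z ^ n + w ^ n) := by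
  simp only [laurentEval, ← Finsupp.sum_add, mul_add]

theorem exists_eval_qRacahEta_eq_laurentEval_add {d : ℂ} (hd : d ≠ 0) (f : LaurentPolynomial ℂ) :
    ∃ g : ℂ[X], ∀ z : ℂ, z ≠ 0 →
      g.eval (qRacahEta d z) = laurentEval z f + laurentEval (1 / (d * z)) f := by
  obtain ⟨s, rfl⟩ := IsAlgClosed.exists_pow_nat_eq d two_pos
  have hs : s ≠ 0 := by rintro rfl; simp at hd
  refine ⟨f.coeff.sum fun n a => C a * qRacahDickson s n, fun z hz => ?_⟩
  simp only [laurentEval_add_laurentEval, Finsupp.sum, eval_finsetSum, eval_mul, eval_C,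
    eval_qRacahEta_qRacahDickson hs hz]

/-- Lemma 2.1 (q-Racah case, multiplicative variable `z = q^x`): a Laurent polynomial
`f` is invariant under the involution `z ↦ 1/(d z)` iff it is a polynomial in the
q-Racah sinusoidal coordinate `η_d(z) = (z⁻¹ - 1)(1 - d z)`. -/
theorem qracah_involution_invariant_iff_poly_in_eta (d : ℂ) (hd : d ≠ 0)
    (f : LaurentPolynomial ℂ) :
    (∀ z : ℂ, z ≠ 0 → laurentEval (1 / (d * z)) f = laurentEval z f) ↔
      ∃ g : Polynomial ℂ, ∀ z : ℂ, z ≠ 0 →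
        laurentEval z f = g.eval ((z⁻¹ - 1) * (1 - d * z)) := by
  constructor
  · intro hf
    obtain ⟨g, hg⟩ := exists_eval_qRacahEta_eq_laurentEval_add hd f
    refine ⟨C 2⁻¹ * g, fun z hz => ?_⟩
    rw [eval_mul, eval_C, ← qRacahEta, hg z hz, hf z hz]
    ring
  · rintro ⟨g, hg⟩ z hz
    rw [hg z hz, hg _ (one_div_ne_zero (mul_ne_zero hd hz))]
    exact congrArg g.eval (qRacahEta_one_div_mul hd z)
end

section
/- For every d ∈ ℂ and every n ∈ ℕ there exists a unique polynomial g ∈ ℂ[x], and it has degree exactly n, such that for all t ∈ ℂ: (t(t+d))^{n+1} − ((t−1)(t−1+d))^{n+1} = (2t−1+d) · g(t(t+d−1)). (Property (3.4) of the Racah sinusoidal coordinate: the difference quotient (η_d(t)^{n+1} − η_d(t−1)^{n+1})/(η_d(t) − η_d(t−1)) is a polynomial of degree n in η_{d−1}(t).) -/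
/-!
Put `x = t(t+d-1)`, `a = t(t+d)` and `b = (t-1)(t-1+d)`. Then `a + b = 2x + 1 - d` and
`ab = x² - dx` are polynomials in `x`, so the quotient `(a^{n+1} - b^{n+1})/(a - b)`, which is
the Lucas sequence `Uₙ(a + b, ab)`, is the value at `x` of the polynomial
`Uₙ(2X + 1 - d, X² - dX)`. Its degree is `n`, because the top coefficients follow the recurrence
of `Uₙ(2, 1) = n + 1`. Uniqueness: cancel the nonzero factor `2t - 1 + d` in `ℂ[t]` and use that
composition with the nonconstant `t(t+d-1)` is injective.
-/

open Polynomial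

section LucasU

variable {R : Type*} [CommRing R]

def lucasU (p q : R) : ℕ → R
  | 0 => 1
  | 1 => p
  | n + 2 => p * lucasU p q (n + 1) - q * lucasU p q n

theorem sub_mul_lucasU (a b : R) (n : ℕ) :
    (a - b) * lucasU (a + b) (a * b) n = a ^ (n + 1) - b ^ (n + 1) := by
  induction n using Nat.twoStepInduction with
  | zero => simp [lucasU]
  | one => simp only [lucasU]; ring
  | more n ih₀ ih₁ =>
    rw [lucasU]
    linear_combination (a + b) * ih₁ - a * b * ih₀

theorem map_lucasU {S : Type*} [CommRing S] (f : R →+* S) (p q : R) (n : ℕ) :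
    f (lucasU p q n) = lucasU (f p) (f q) n := by
  induction n using Nat.twoStepInduction with
  | zero => simp [lucasU]
  | one => simp [lucasU]
  | more n ih₀ ih₁ => simp [lucasU, ih₀, ih₁]

theorem lucasU_two_one (n : ℕ) : lucasU (2 : R) 1 n = n + 1 := by
  induction n using Nat.twoStepInduction with
  | zero => simp [lucasU]
  | one => norm_num [lucasU]
  | more n ih₀ ih₁ =>
    rw [lucasU, ih₀, ih₁]
    push_cast
    ring

namespace Polynomial

variable {p q : R[X]}

theorem natDegree_lucasU_le (hp : p.natDegree ≤ 1) (hq : q.natDegree ≤ 2) (n : ℕ) :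
    (lucasU p q n).natDegree ≤ n := by
  induction n using Nat.twoStepInduction with
  | zero => simp [lucasU]
  | one => exact hp
  | more n ih₀ ih₁ =>
    refine (natDegree_sub_le _ _).trans (max_le ?_ ?_)
    · exact natDegree_mul_le.trans (by omega)
    · exact natDegree_mul_le.trans (by omega)

theorem coeff_lucasU_self (hp : p.natDegree ≤ 1) (hq : q.natDegree ≤ 2) (n : ℕ) :
    (lucasU p q n).coeff n = lucasU (p.coeff 1) (q.coeff 2) n := by
  induction n using Nat.twoStepInduction with
  | zero => simp [lucasU]
  | one => simp [lucasU]
  | more n ih₀ ih₁ =>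
    have hpU : (p * lucasU p q (n + 1)).coeff (1 + (n + 1))
        = p.coeff 1 * (lucasU p q (n + 1)).coeff (n + 1) :=
      coeff_mul_add_eq_of_natDegree_le hp (natDegree_lucasU_le hp hq _)
    have hqU : (q * lucasU p q n).coeff (2 + n) = q.coeff 2 * (lucasU p q n).coeff n :=
      coeff_mul_add_eq_of_natDegree_le hq (natDegree_lucasU_le hp hq _)
    rw [lucasU, lucasU, coeff_sub, show n + 2 = 1 + (n + 1) by omega, hpU,
      show 1 + (n + 1) = 2 + n by omega, hqU, ih₀, ih₁]

end Polynomial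

end LucasU

theorem Polynomial.eq_of_eval_mul_eval_comp_eq {R : Type*} [CommRing R] [IsDomain R] [Infinite R]
    {s q g g' : R[X]} (hs : s ≠ 0) (hq : q.natDegree ≠ 0)
    (h : ∀ t, s.eval t * g.eval (q.eval t) = s.eval t * g'.eval (q.eval t)) : g = g' := by
  have hcomp : s * g.comp q = s * g'.comp q := funext fun t ↦ by simpa using h t
  have hsub : (g - g').comp q = 0 := by rw [sub_comp, mul_left_cancel₀ hs hcomp, sub_self]
  rcases comp_eq_zero_iff.mp hsub with hg | ⟨-, hconst⟩
  · exact sub_eq_zero.mp hg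
  · exact absurd (by rw [hconst, natDegree_C]) hq

section Racah

variable {R : Type*} [CommRing R]

/-- The difference quotient of `η_d(t)^{n+1}` as a polynomial in `η_{d-1}(t) = t(t+d-1)`. -/
noncomputable def racahQuotient (d : R) (n : ℕ) : R[X] :=
  lucasU (2 * X + C (1 - d)) (X ^ 2 - C d * X) n

theorem pow_sub_pow_eq_mul_eval_racahQuotient (d t : R) (n : ℕ) :
    (t * (t + d)) ^ (n + 1) - ((t - 1) * (t - 1 + d)) ^ (n + 1)
      = (2 * t - 1 + d) * (racahQuotient d n).eval (t * (t + d - 1)) := by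
  rw [racahQuotient, ← coe_evalRingHom, map_lucasU, ← sub_mul_lucasU]
  simp only [coe_evalRingHom, eval_add, eval_sub, eval_mul, eval_pow, eval_X, eval_C, eval_ofNat]
  congr 1
  · ring
  · congr 1 <;> ring

theorem degree_racahQuotient [CharZero R] (d : R) (n : ℕ) : (racahQuotient d n).degree = n := by
  have hp : (2 * X + C (1 - d)).natDegree ≤ 1 := by compute_degree
  have hq : (X ^ 2 - C d * X).natDegree ≤ 2 := by compute_degree
  refine degree_eq_of_le_of_coeff_ne_zero ?_ ?_
  · exact degree_le_natDegree.trans (by exact_mod_cast natDegree_lucasU_le hp hq n)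
  · rw [racahQuotient, coeff_lucasU_self hp hq]
    simpa [coeff_X, coeff_C, coeff_one, lucasU_two_one] using Nat.cast_add_one_ne_zero (R := R) n

end Racah

/-- Property (3.4) of the Racah sinusoidal coordinate `η_d(t) = t(t+d)`:
the difference quotient `(η_d(t)^{n+1} - η_d(t-1)^{n+1})/(η_d(t) - η_d(t-1))`
is a (unique) polynomial of degree exactly `n` in `η_{d-1}(t) = t(t+d-1)`;
note `η_d(t) - η_d(t-1) = 2t-1+d`. -/
theorem racah_power_difference_quotient (d : ℂ) (n : ℕ) :
    ∃ g : Polynomial ℂ,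
      (∀ t : ℂ, (t * (t + d)) ^ (n + 1) - ((t - 1) * (t - 1 + d)) ^ (n + 1)
          = (2 * t - 1 + d) * g.eval (t * (t + d - 1)))
      ∧ g.degree = n
      ∧ ∀ g' : Polynomial ℂ,
          (∀ t : ℂ, (t * (t + d)) ^ (n + 1) - ((t - 1) * (t - 1 + d)) ^ (n + 1)
            = (2 * t - 1 + d) * g'.eval (t * (t + d - 1))) → g' = g := by
  refine ⟨racahQuotient d n, (pow_sub_pow_eq_mul_eval_racahQuotient d · n), degree_racahQuotient d n,
    fun g' hg' ↦ ?_⟩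
  refine eq_of_eval_mul_eval_comp_eq (s := 2 * X - 1 + C d) (q := X * (X + C d - 1)) ?_ ?_
    fun t ↦ by simpa using (hg' t).symm.trans (pow_sub_pow_eq_mul_eval_racahQuotient d t n)
  · intro hs
    simpa [coeff_X, coeff_C, coeff_one] using congrArg (coeff · 1) hs
  · have : (X * (X + C d - 1)).natDegree = 2 := by compute_degree!
    omega
end

section
/- Let 0 < q < 1 and d ∈ ℂ. For every n ∈ ℕ there exists a unique polynomial g ∈ ℂ[x], and it has degree exactly n, such that for all z ∈ ℂ∖{0}: η_d(z)^{n+1} − η_d(z/q)^{n+1} = (η_d(z) − η_d(z/q)) · g(η_{d/q}(z)). (Property (3.4) of the q-Racah sinusoidal coordinate: the difference quotient of consecutive powers is a polynomial of degree n in the parameter-shifted coordinate.) -/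
open Polynomial

/-- Recursive family: `qrG S P n` represents the symmetric function
`∑_{k=0}^n a^k b^{n-k}` expressed via `S` (eval = `a+b`) and `P` (eval = `a*b`). -/
noncomputable def qrG (S P : Polynomial ℂ) : ℕ → Polynomial ℂ
  | 0 => 1
  | 1 => S
  | (n+2) => S * qrG S P (n+1) - P * qrG S P n

lemma qrG_eval_key {S P : Polynomial ℂ} {a b m : ℂ}
    (hs : S.eval m = a + b) (hp : P.eval m = a * b) :
    ∀ n, a ^ (n+1) - b ^ (n+1) = (a - b) * (qrG S P n).eval m := by
  have key : ∀ n, (a ^ (n+1) - b ^ (n+1) = (a - b) * (qrG S P n).eval m) ∧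
      (a ^ (n+2) - b ^ (n+2) = (a - b) * (qrG S P (n+1)).eval m) := by
    intro n
    induction n with
    | zero =>
      constructor
      · simp [qrG]
      · show a ^ 2 - b ^ 2 = (a - b) * (qrG S P 1).eval m
        simp only [qrG, hs]; ring
    | succ k ih =>
      refine ⟨ih.2, ?_⟩
      have h1 := ih.1
      have h2 := ih.2
      show a ^ (k+3) - b ^ (k+3) = (a - b) * (qrG S P (k+2)).eval m
      have hrec : qrG S P (k+2) = S * qrG S P (k+1) - P * qrG S P k := rfl
      rw [hrec]
      simp only [eval_sub, eval_mul, hs, hp]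
      have e : a ^ (k+3) - b ^ (k+3)
          = (a+b) * (a ^ (k+2) - b ^ (k+2)) - (a*b) * (a ^ (k+1) - b ^ (k+1)) := by ring
      rw [e, h2, h1]; ring
  exact fun n => (key n).1

lemma qrG_degree {S P : Polynomial ℂ} {q : ℝ} (hq : 0 < q)
    (hS : S.degree = 1) (hSl : S.leadingCoeff = 1 + (q : ℂ))
    (hP : P.degree = 2) (hPl : P.leadingCoeff = (q : ℂ)) :
    ∀ n, (qrG S P n).degree = n := by
  have hLpos : ∀ n : ℕ, (0 : ℝ) < ∑ i ∈ Finset.range (n+1), q ^ i := by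
    intro n
    exact Finset.sum_pos (fun i _ => pow_pos hq i) ⟨0, Finset.mem_range.2 (Nat.succ_pos n)⟩
  have key : ∀ n, ((qrG S P n).degree = (n : ℕ) ∧
      (qrG S P n).leadingCoeff = ((∑ i ∈ Finset.range (n+1), q ^ i : ℝ) : ℂ)) ∧
      ((qrG S P (n+1)).degree = ((n+1 : ℕ) : WithBot ℕ) ∧
      (qrG S P (n+1)).leadingCoeff = ((∑ i ∈ Finset.range (n+2), q ^ i : ℝ) : ℂ)) := by
    intro n
    induction n with
    | zero =>
      refine ⟨⟨?_, ?_⟩, ?_, ?_⟩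
      · simp [qrG]
      · simp [qrG]
      · show (qrG S P 1).degree = ((1 : ℕ) : WithBot ℕ)
        simpa [qrG] using hS
      · show (qrG S P 1).leadingCoeff = _
        simp only [qrG, hSl, Finset.sum_range_succ, Finset.sum_range_one]
        push_cast
        ring
    | succ k ih =>
      have hd1 := ih.1.1
      have hl1 := ih.1.2
      have hd2 := ih.2.1
      have hl2 := ih.2.2
      have hrec : qrG S P (k+2) = S * qrG S P (k+1) - P * qrG S P k := rfl
      have hdA : (S * qrG S P (k+1)).degree = ((k+2 : ℕ) : WithBot ℕ) := by
        rw [degree_mul, hS, hd2]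
        norm_cast
        omega
      have hdB : (P * qrG S P k).degree = ((k+2 : ℕ) : WithBot ℕ) := by
        rw [degree_mul, hP, hd1]
        norm_cast
        omega
      have hnA := natDegree_eq_of_degree_eq_some hdA
      have hnB := natDegree_eq_of_degree_eq_some hdB
      have hcA : (S * qrG S P (k+1)).coeff (k+2)
          = (1 + (q:ℂ)) * ((∑ i ∈ Finset.range (k+2), q ^ i : ℝ) : ℂ) := by
        have h' : (S * qrG S P (k+1)).coeff ((S * qrG S P (k+1)).natDegree)
            = (1 + (q:ℂ)) * ((∑ i ∈ Finset.range (k+2), q ^ i : ℝ) : ℂ) := by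
          rw [Polynomial.coeff_natDegree, leadingCoeff_mul, hSl, hl2]
        rwa [hnA] at h'
      have hcB : (P * qrG S P k).coeff (k+2)
          = (q:ℂ) * ((∑ i ∈ Finset.range (k+1), q ^ i : ℝ) : ℂ) := by
        have h' : (P * qrG S P k).coeff ((P * qrG S P k).natDegree)
            = (q:ℂ) * ((∑ i ∈ Finset.range (k+1), q ^ i : ℝ) : ℂ) := by
          rw [Polynomial.coeff_natDegree, leadingCoeff_mul, hPl, hl1]
        rwa [hnB] at h'
      have hreal : (1+q) * (∑ i ∈ Finset.range (k+2), q ^ i)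
          - q * (∑ i ∈ Finset.range (k+1), q ^ i) = ∑ i ∈ Finset.range (k+3), q ^ i := by
        rw [show k+3 = (k+2)+1 from rfl, Finset.sum_range_succ (fun i => q ^ i) (k+2),
          show k+2 = (k+1)+1 from rfl, Finset.sum_range_succ (fun i => q ^ i) (k+1)]
        ring
      have hcoeff : (qrG S P (k+2)).coeff (k+2)
          = ((∑ i ∈ Finset.range (k+3), q ^ i : ℝ) : ℂ) := by
        rw [hrec, coeff_sub, hcA, hcB]
        exact_mod_cast congrArg (fun x : ℝ => (x : ℂ)) hreal
      have hne : (qrG S P (k+2)).coeff (k+2) ≠ 0 := by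
        rw [hcoeff]
        exact_mod_cast (hLpos (k+2)).ne'
      have hdeg : (qrG S P (k+2)).degree = ((k+2 : ℕ) : WithBot ℕ) := by
        refine le_antisymm ?_ (le_degree_of_ne_zero hne)
        rw [hrec]
        refine le_trans (degree_sub_le _ _) ?_
        rw [hdA, hdB, max_self]
      refine ⟨ih.2, hdeg, ?_⟩
      rw [Polynomial.leadingCoeff, natDegree_eq_of_degree_eq_some hdeg, hcoeff]
  exact fun n => (key n).1.1

/-- Property (3.4) of the q-Racah sinusoidal coordinate (multiplicative variable
`z = q^x`, `η_d(z) = (z⁻¹-1)(1-dz)`): the difference quotient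
`(η_d(z)^{n+1} - η_d(z/q)^{n+1})/(η_d(z) - η_d(z/q))` is a (unique) polynomial of
degree exactly `n` in the parameter-shifted coordinate `η_{d/q}(z) = (z⁻¹-1)(1-dz/q)`. -/
theorem qracah_power_difference_quotient (q : ℝ) (hq : 0 < q) (hq1 : q < 1)
    (d : ℂ) (n : ℕ) :
    ∃ g : Polynomial ℂ,
      (∀ z : ℂ, z ≠ 0 →
        ((z⁻¹ - 1) * (1 - d * z)) ^ (n + 1)
            - (((z / (q : ℂ))⁻¹ - 1) * (1 - d * (z / (q : ℂ)))) ^ (n + 1)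
          = (((z⁻¹ - 1) * (1 - d * z)) - (((z / (q : ℂ))⁻¹ - 1) * (1 - d * (z / (q : ℂ)))))
              * g.eval ((z⁻¹ - 1) * (1 - d * z / (q : ℂ))))
      ∧ g.degree = n
      ∧ ∀ g' : Polynomial ℂ,
          (∀ z : ℂ, z ≠ 0 →
            ((z⁻¹ - 1) * (1 - d * z)) ^ (n + 1)
                - (((z / (q : ℂ))⁻¹ - 1) * (1 - d * (z / (q : ℂ)))) ^ (n + 1)
              = (((z⁻¹ - 1) * (1 - d * z)) - (((z / (q : ℂ))⁻¹ - 1) * (1 - d * (z / (q : ℂ)))))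
                  * g'.eval ((z⁻¹ - 1) * (1 - d * z / (q : ℂ)))) → g' = g := by
  set Q : ℂ := (q : ℂ) with hQdef
  have hQ0 : Q ≠ 0 := by
    simp only [hQdef, Ne, Complex.ofReal_eq_zero]
    exact hq.ne'
  have hQne1 : Q ≠ 1 := by
    simp only [hQdef, Ne]
    intro h
    have : q = 1 := by exact_mod_cast h
    linarith
  have h1Q : 1 + Q ≠ 0 := by
    have : ((1 + q : ℝ) : ℂ) ≠ 0 := by
      simp only [Ne, Complex.ofReal_eq_zero]
      linarith
    simpa using this
  set c : ℂ := 1 + d / Q with hc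
  set S : Polynomial ℂ := C (1 + Q) * X + C ((Q - 1) * (Q - d) / Q) with hSdef
  set P : Polynomial ℂ := C Q * X ^ 2 + C ((Q - 1) * (1 - d)) * X + C 0 with hPdef
  have hS : S.degree = 1 := degree_linear h1Q
  have hSl : S.leadingCoeff = 1 + Q := leadingCoeff_linear h1Q
  have hP : P.degree = 2 := degree_quadratic hQ0
  have hPl : P.leadingCoeff = Q := leadingCoeff_quadratic hQ0
  -- eval identities
  have hsum : ∀ z : ℂ, z ≠ 0 →
      S.eval ((z⁻¹ - 1) * (1 - d * z / Q))
        = ((z⁻¹ - 1) * (1 - d * z)) + (((z / Q)⁻¹ - 1) * (1 - d * (z / Q))) := by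
    intro z hz
    simp only [hSdef, eval_add, eval_mul, eval_C, eval_X, hc]
    field_simp
    ring
  have hprod : ∀ z : ℂ, z ≠ 0 →
      P.eval ((z⁻¹ - 1) * (1 - d * z / Q))
        = ((z⁻¹ - 1) * (1 - d * z)) * (((z / Q)⁻¹ - 1) * (1 - d * (z / Q))) := by
    intro z hz
    simp only [hPdef, eval_add, eval_mul, eval_pow, eval_C, eval_X, hc]
    field_simp
    ring
  refine ⟨qrG S P n, ?_, qrG_degree hq hS hSl hP hPl n, ?_⟩
  · intro z hz
    exact qrG_eval_key (hsum z hz) (hprod z hz) n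
  · intro g' hg'
    by_contra hcon
    set h : Polynomial ℂ := g' - qrG S P n with hhdef
    have hne : h ≠ 0 := sub_ne_zero.2 hcon
    -- finitely many bad points
    set p1 : Polynomial ℂ := 1 - C (d / Q) * X ^ 2 with hp1def
    have hp1ne : p1 ≠ 0 := by
      intro h0
      have := congrArg (eval 0) h0
      simp [hp1def] at this
    set pr : ℂ → Polynomial ℂ := fun r => C (d / Q) * X ^ 2 - C (r + c) * X + 1 with hprdef
    have hprne : ∀ r, pr r ≠ 0 := by
      intro r h0
      have := congrArg (eval 0) h0
      simp [hprdef] at this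
    set B : Set ℂ := {0} ∪ {z | p1.IsRoot z} ∪ ⋃ r ∈ h.roots.toFinset, {z | (pr r).IsRoot z}
      with hBdef
    have hBfin : B.Finite := by
      refine Set.Finite.union (Set.Finite.union (Set.finite_singleton 0)
        (Polynomial.finite_setOf_isRoot hp1ne)) ?_
      exact Set.Finite.biUnion (h.roots.toFinset.finite_toSet)
        (fun r _ => Polynomial.finite_setOf_isRoot (hprne r))
    obtain ⟨z, hzB⟩ := hBfin.infinite_compl.nonempty
    simp only [hBdef, Set.compl_union, Set.mem_inter_iff, Set.mem_compl_iff,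
      Set.mem_singleton_iff, Set.mem_setOf_eq, Set.mem_iUnion, not_exists] at hzB
    obtain ⟨⟨hz0, hzp1⟩, hzpr⟩ := hzB
    have e1 := hg' z hz0
    have e2 := qrG_eval_key (hsum z hz0) (hprod z hz0) n
    set μ : ℂ := (z⁻¹ - 1) * (1 - d * z / Q) with hμ
    have hfactor : ((z⁻¹ - 1) * (1 - d * z)) - (((z / Q)⁻¹ - 1) * (1 - d * (z / Q)))
        = (1 - Q) * z⁻¹ * p1.eval z := by
      simp only [hp1def, eval_sub, eval_mul, eval_pow, eval_C, eval_X, eval_one]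
      field_simp
      ring
    have hfne : ((z⁻¹ - 1) * (1 - d * z)) - (((z / Q)⁻¹ - 1) * (1 - d * (z / Q))) ≠ 0 := by
      rw [hfactor]
      refine mul_ne_zero (mul_ne_zero (sub_ne_zero.2 ?_) (inv_ne_zero hz0)) hzp1
      exact fun hh => hQne1 hh.symm
    have heq : g'.eval μ = (qrG S P n).eval μ := by
      have := e1.symm.trans e2
      exact mul_left_cancel₀ hfne this
    have hroot : h.IsRoot μ := by
      simp only [hhdef, IsRoot, eval_sub]
      rw [heq]
      ring
    have hmem : μ ∈ h.roots.toFinset := by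
      rw [Multiset.mem_toFinset, mem_roots hne]
      exact hroot
    refine hzpr μ hmem ?_
    simp only [hprdef, IsRoot, eval_add, eval_sub, eval_mul, eval_pow, eval_C, eval_X,
      eval_one, hμ, hc]
    field_simp
    ring
end

section
/- For every d ∈ ℂ and every nonzero polynomial p ∈ ℂ[x] there exists a unique polynomial P ∈ ℂ[x] with P(0) = 0 such that for all t ∈ ℂ: P(t(t+d)) − P((t−1)(t−1+d)) = (2t−1+d) · p(t(t+d−1)); moreover deg P = deg p + 1. (Well-definedness of the 'primitive polynomial' map I_λ[p] = P for the Racah case.) -/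
open Polynomial

noncomputable def racahQ (d : ℂ) : ℕ → Polynomial ℂ
  | 0 => 1
  | 1 => 2 * X + C (1 - d)
  | (k+2) => (2 * X + C (1 - d)) * racahQ d (k+1) - (X ^ 2 - C d * X) * racahQ d k

lemma racahQ_key (d : ℂ) : ∀ k : ℕ, ∀ t : ℂ,
    (2 * t - 1 + d) * (racahQ d k).eval (t * (t + d - 1))
      = (t * (t + d)) ^ (k + 1) - ((t - 1) * (t - 1 + d)) ^ (k + 1) := by
  intro k
  induction k using Nat.twoStepInduction with
  | zero => intro t; simp [racahQ]; ring
  | one => intro t; simp [racahQ]; ring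
  | more k ih1 ih2 =>
    intro t
    have h1 := ih1 t
    have h2 := ih2 t
    simp only [racahQ, eval_sub, eval_mul, eval_add, eval_pow, eval_X, eval_C,
      eval_ofNat, eval_one]
    linear_combination (2 * (t * (t + d - 1)) + 1 - d) * h2
      - ((t * (t + d - 1)) ^ 2 - d * (t * (t + d - 1))) * h1

lemma racahQ_deg (d : ℂ) : ∀ k : ℕ,
    (racahQ d k).natDegree ≤ k ∧ (racahQ d k).coeff k = k + 1 := by
  intro k
  induction k using Nat.twoStepInduction with
  | zero => constructor <;> simp [racahQ]
  | one =>
    constructor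
    · simp only [racahQ]; compute_degree
    · simp [racahQ, coeff_add, coeff_C, coeff_one]; norm_num
  | more k ih1 ih2 =>
    obtain ⟨hd1, hc1⟩ := ih1
    obtain ⟨hd2, hc2⟩ := ih2
    have hC2 : (2 : Polynomial ℂ) = C 2 := (map_ofNat C 2).symm
    constructor
    · simp only [racahQ]
      refine le_trans (natDegree_sub_le _ _) (max_le ?_ ?_)
      · refine le_trans (natDegree_mul_le) ?_
        have : (2 * X + C (1 - d) : Polynomial ℂ).natDegree ≤ 1 := by compute_degree
        omega
      · refine le_trans (natDegree_mul_le) ?_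
        have : (X ^ 2 - C d * X : Polynomial ℂ).natDegree ≤ 2 := by compute_degree
        omega
    · have z2 : (racahQ d (k+1)).coeff (k+2) = 0 :=
        coeff_eq_zero_of_natDegree_lt (by omega)
      have z1 : (racahQ d k).coeff (k+1) = 0 :=
        coeff_eq_zero_of_natDegree_lt (by omega)
      have e1 : ((2 * X + C (1 - d)) * racahQ d (k+1)).coeff (k+2)
          = 2 * (racahQ d (k+1)).coeff (k+1) + (1 - d) * (racahQ d (k+1)).coeff (k+2) := by
        rw [add_mul, coeff_add, mul_assoc, hC2, coeff_C_mul, coeff_C_mul]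
        congr 1
        exact congrArg (2 * ·) (coeff_X_mul (racahQ d (k+1)) (k+1))
      have e2 : ((X ^ 2 - C d * X) * racahQ d k).coeff (k+2)
          = (racahQ d k).coeff k - d * (racahQ d (k)).coeff (k+1) := by
        rw [sub_mul, coeff_sub, mul_assoc, coeff_C_mul]
        congr 1
        · exact coeff_X_pow_mul (racahQ d k) 2 k
        · exact congrArg (d * ·) (coeff_X_mul (racahQ d k) (k+1))
      simp only [racahQ, coeff_sub, e1, e2, z1, z2, hc1, hc2]
      push_cast
      ring

lemma natDegree_le_of_coeff_zero {q : Polynomial ℂ} {m : ℕ}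
    (h1 : q.natDegree ≤ m + 1) (h2 : q.coeff (m + 1) = 0) : q.natDegree ≤ m := by
  rcases eq_or_ne q 0 with rfl | hq
  · simp
  · have : q.natDegree ≠ m + 1 := by
      intro h
      exact (leadingCoeff_ne_zero.mpr hq) (by rwa [leadingCoeff, h])
    omega

lemma racah_exists (d : ℂ) : ∀ n : ℕ, ∀ p : Polynomial ℂ, p.natDegree ≤ n →
    ∃ P : Polynomial ℂ, P.coeff 0 = 0 ∧ P.natDegree ≤ n + 1 ∧
      P.coeff (n + 1) = p.coeff n / (n + 1) ∧
      ∀ t : ℂ, P.eval (t * (t + d)) - P.eval ((t - 1) * (t - 1 + d))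
        = (2 * t - 1 + d) * p.eval (t * (t + d - 1)) := by
  intro n
  induction n with
  | zero =>
    intro p hp
    have hpC : p = C (p.coeff 0) := Polynomial.eq_C_of_natDegree_le_zero hp
    refine ⟨C (p.coeff 0) * X, by simp, ?_, by simp, ?_⟩
    · exact le_trans (natDegree_mul_le) (by simp [natDegree_X])
    · intro t
      rw [hpC]
      simp
      ring
  | succ n ih =>
    intro p hp
    set a : ℂ := p.coeff (n + 1) / (n + 2) with ha
    set p' : Polynomial ℂ := p - C a * racahQ d (n + 1) with hp'
    obtain ⟨hQd, hQc⟩ := racahQ_deg d (n + 1)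
    have hp'd : p'.natDegree ≤ n := by
      apply natDegree_le_of_coeff_zero
      · refine le_trans (natDegree_sub_le _ _) (max_le hp ?_)
        exact le_trans natDegree_mul_le (by simp [hQd])
      · rw [hp', coeff_sub, coeff_C_mul, hQc, ha]
        have hne : (n : ℂ) + 2 ≠ 0 := by
          intro h
          have h2 : (((n + 2 : ℕ) : ℂ)) = 0 := by push_cast; linear_combination h
          have h3 : (n + 2 : ℕ) = 0 := by exact_mod_cast h2
          omega
        push_cast
        rw [show ((n : ℂ) + 1 + 1) = (n : ℂ) + 2 by ring, div_mul_cancel₀ _ hne, sub_self]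
    obtain ⟨P₂, hc0, hdeg, _, heq⟩ := ih p' hp'd
    refine ⟨C a * X ^ (n + 2) + P₂, by simp [hc0], ?_, ?_, ?_⟩
    · refine le_trans (natDegree_add_le _ _) (max_le ?_ (by omega))
      exact le_trans natDegree_mul_le (by simp)
    · have : P₂.coeff (n + 2) = 0 := coeff_eq_zero_of_natDegree_lt (by omega)
      rw [coeff_add, coeff_C_mul, coeff_X_pow, this, ha]
      push_cast
      ring_nf
      simp
    · intro t
      have hk := racahQ_key d (n + 1) t
      have h2 := heq t
      have hpe : p.eval (t * (t + d - 1))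
          = p'.eval (t * (t + d - 1)) + a * (racahQ d (n + 1)).eval (t * (t + d - 1)) := by
        rw [hp']; simp
      simp only [eval_add, eval_mul, eval_pow, eval_C, eval_X, hpe]
      linear_combination h2 - a * hk

lemma racah_unique_aux (d : ℂ) (R : Polynomial ℂ) (h0 : R.eval 0 = 0)
    (h : ∀ t : ℂ, R.eval (t * (t + d)) = R.eval ((t - 1) * (t - 1 + d))) : R = 0 := by
  have key : ∀ n : ℕ, R.eval ((n : ℂ) * ((n : ℂ) + d)) = 0 := by
    intro n
    induction n with
    | zero => simpa using h0
    | succ n ih =>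
      have h2 := h ((n : ℂ) + 1)
      rw [show ((n : ℂ) + 1 - 1) = (n : ℂ) by ring] at h2
      rw [show (((n + 1 : ℕ) : ℂ) * (((n + 1 : ℕ) : ℂ) + d))
        = ((n : ℂ) + 1) * ((n : ℂ) + 1 + d) by push_cast; ring, h2]
      exact ih
  have hinj : Set.InjOn (fun n : ℕ => (n : ℂ) * ((n : ℂ) + d)) {n : ℕ | ‖d‖ < (n : ℝ)} := by
    intro n hn m hm hnm
    simp only at hnm
    have hz : ((n : ℂ) - m) * ((n : ℂ) + m + d) = 0 := by linear_combination hnm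
    rcases mul_eq_zero.mp hz with h1 | h1
    · exact_mod_cast sub_eq_zero.mp h1
    · exfalso
      have hd : d = -(((n + m : ℕ) : ℂ)) := by push_cast; linear_combination h1
      have hnd : ‖d‖ = ((n + m : ℕ) : ℝ) := by
        rw [hd, norm_neg]
        exact_mod_cast Complex.norm_natCast _
      simp only [Set.mem_setOf_eq] at hn hm
      rw [hnd] at hn hm
      push_cast at hn hm
      have := norm_nonneg d
      rw [hnd] at this
      push_cast at this
      linarith
  have hinf : ({n : ℕ | ‖d‖ < (n : ℝ)}).Infinite := by
    refine Set.Infinite.mono ?_ (Set.Ici_infinite (⌈‖d‖⌉₊ + 1))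
    intro n hn
    simp only [Set.mem_Ici] at hn
    simp only [Set.mem_setOf_eq]
    calc ‖d‖ ≤ (⌈‖d‖⌉₊ : ℝ) := Nat.le_ceil _
      _ < (n : ℝ) := by exact_mod_cast Nat.lt_of_lt_of_le (Nat.lt_succ_self _) hn
  have hroots : ({x : ℂ | R.IsRoot x}).Infinite := by
    refine Set.Infinite.mono ?_ (hinf.image hinj)
    rintro x ⟨n, -, rfl⟩
    exact key n
  exact Polynomial.eq_zero_of_infinite_isRoot R hroots


/-- Well-definedness of the 'primitive polynomial' map `I_λ[p] = P` (Racah case):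
for every nonzero `p` there is a unique polynomial `P` with `P(0) = 0` and
`P(η_d(t)) - P(η_d(t-1)) = (η_d(t) - η_d(t-1)) · p(η_{d-1}(t))` for all `t`,
where `η_d(t) = t(t+d)`, `η_d(t) - η_d(t-1) = 2t-1+d`, `η_{d-1}(t) = t(t+d-1)`;
moreover `deg P = deg p + 1`. -/
theorem racah_primitive_polynomial (d : ℂ) (p : Polynomial ℂ) (hp : p ≠ 0) :
    ∃ P : Polynomial ℂ,
      (P.eval 0 = 0 ∧
        ∀ t : ℂ, P.eval (t * (t + d)) - P.eval ((t - 1) * (t - 1 + d))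
          = (2 * t - 1 + d) * p.eval (t * (t + d - 1)))
      ∧ P.natDegree = p.natDegree + 1
      ∧ ∀ P' : Polynomial ℂ,
          (P'.eval 0 = 0 ∧
            ∀ t : ℂ, P'.eval (t * (t + d)) - P'.eval ((t - 1) * (t - 1 + d))
              = (2 * t - 1 + d) * p.eval (t * (t + d - 1))) → P' = P := by
  obtain ⟨P, hc0, hdle, hctop, heq⟩ := racah_exists d p.natDegree p le_rfl
  have hne : p.coeff p.natDegree ≠ 0 := by
    rw [← leadingCoeff]; exact leadingCoeff_ne_zero.mpr hp
  have hcast : ((p.natDegree : ℂ) + 1) ≠ 0 := by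
    have : (((p.natDegree + 1 : ℕ)) : ℂ) ≠ 0 := by
      rw [Nat.cast_ne_zero]; omega
    push_cast at this; exact this
  have hcne : P.coeff (p.natDegree + 1) ≠ 0 := by
    rw [hctop]; exact div_ne_zero hne hcast
  have hdeg : P.natDegree = p.natDegree + 1 :=
    le_antisymm hdle (le_natDegree_of_ne_zero hcne)
  have hP0 : P.eval 0 = 0 := by rw [← coeff_zero_eq_eval_zero]; exact hc0
  refine ⟨P, ⟨hP0, heq⟩, hdeg, ?_⟩
  rintro P' ⟨h0', heq'⟩
  have hz : P' - P = 0 := by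
    apply racah_unique_aux d
    · simp [h0', hP0]
    · intro t
      simp only [eval_sub]
      linear_combination heq' t - heq t
  exact sub_eq_zero.mp hz
end

section
/- With Ř^{[s]}_{n,k}(x) defined by the recursion below from arbitrary data A, B, C, η, the following identity holds for all integers s ≥ 0, n, k and all x ∈ ℤ: Ř^{[s]}_{n,k}(x+1) − Ř^{[s]}_{n,k}(x) = (η(x) − η(x+s+1)) · Ř^{[s−1]}_{n,k}(x+1). (Identity (3.8), proved by induction on s.) -/
/-- Identity (3.8): with `R (s+1) = Ř^{[s]}` defined by the recursion
`Ř^{[-1]}_{n,k}(x) = [k = 0 ∧ n ≥ 0]`,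
`Ř^{[s]}_{n,k}(x) = A_n Ř^{[s-1]}_{n+1,k-1}(x) + (B_n - η(x+s)) Ř^{[s-1]}_{n,k}(x)
+ C_n Ř^{[s-1]}_{n-1,k+1}(x)` from arbitrary data `A, B, C, η` with `A(-1) = 0`, one has
`Ř^{[s]}_{n,k}(x+1) - Ř^{[s]}_{n,k}(x) = (η(x) - η(x+s+1)) Ř^{[s-1]}_{n,k}(x+1)`
for all `s ≥ 0` and all integers `n, k, x`. -/
theorem Rhat_difference_identity {K : Type*} [Field K]
    (A B C : ℤ → K) (hA : A (-1) = 0) (η : ℤ → K)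
    (R : ℕ → ℤ → ℤ → ℤ → K)
    (hR0 : ∀ (n k x : ℤ), R 0 n k x = if k = 0 ∧ 0 ≤ n then 1 else 0)
    (hRs : ∀ (s : ℕ) (n k x : ℤ), R (s + 1) n k x =
      A n * R s (n + 1) (k - 1) x + (B n - η (x + (s : ℤ))) * R s n k x
        + C n * R s (n - 1) (k + 1) x) :
    ∀ (s : ℕ) (n k x : ℤ),
      R (s + 1) n k (x + 1) - R (s + 1) n k x
        = (η x - η (x + (s : ℤ) + 1)) * R s n k (x + 1) := by
  -- Key lemma: the factor at the "other end" can be peeled off instead.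
  have aux : ∀ (s : ℕ) (n k x : ℤ), R (s + 1) n k x =
      A n * R s (n + 1) (k - 1) (x + 1) + (B n - η x) * R s n k (x + 1)
        + C n * R s (n - 1) (k + 1) (x + 1) := by
    intro s
    induction s with
    | zero =>
      intro n k x
      rw [hRs]
      simp only [Nat.cast_zero, add_zero, hR0]
    | succ s ih =>
      intro n k x
      rw [hRs, ih, ih, ih, hRs s (n + 1) (k - 1) (x + 1), hRs s n k (x + 1),
        hRs s (n - 1) (k + 1) (x + 1)]
      have h1 : x + ((s : ℤ) + 1) = x + 1 + (s : ℤ) := by ring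
      push_cast
      rw [h1]
      ring
  intro s n k x
  rw [hRs s n k (x + 1), aux s n k x]
  have h1 : x + 1 + (s : ℤ) = x + (s : ℤ) + 1 := by ring
  rw [h1]
  ring
end

section
/- Let K be a field, A, B, C : ℤ → K with A(−1) = 0. Define r^{[−1]}_{n,k} = 1 if k = 0 and n ≥ 0, and 0 otherwise (as constant polynomials), and for s ≥ 0 define r^{[s]}_{n,k} ∈ K[t_0,…,t_s] by r^{[s]}_{n,k} = A(n)·r^{[s−1]}_{n+1,k−1} + (B(n) − t_s)·r^{[s−1]}_{n,k} + C(n)·r^{[s−1]}_{n−1,k+1}, regarding K[t_0,…,t_{s−1}] as a subring of K[t_0,…,t_s]. Then for every s ≥ 0 and all integers n, k: (i) r^{[s]}_{n,k} is a symmetric polynomial in the variables t_0, …, t_s; (ii) r^{[s]}_{n,k} = 0 whenever |k| > s+1 or n+k < 0; (iii) the total degree of r^{[s]}_{n,k} is at most s+1−|k| when |k| ≤ s+1. (The claim underlying (3.16): the coefficients Ř^{[s]}_{n,k}(x) are symmetric polynomials in η(x), η(x+1), …, η(x+s).) -/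
open MvPolynomial

section Aux

variable {K : Type*} [Field K]

/-- the `t`-free part of the recursion -/
def mmAux (A B C : ℤ → K) : ℕ → ℤ → ℤ → K
  | 0, n, k => if k = 0 ∧ 0 ≤ n then 1 else 0
  | (p+1), n, k => A n * mmAux A B C p (n+1) (k-1) + B n * mmAux A B C p n k
      + C n * mmAux A B C p (n-1) (k+1)

lemma mmAux_eq_zero (A B C : ℤ → K) :
    ∀ (p : ℕ) (n k : ℤ), (p < k.natAbs ∨ n + k < 0) → mmAux A B C p n k = 0 := by
  intro p
  induction p with
  | zero =>
    intro n k h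
    simp only [mmAux]
    rw [if_neg]
    rintro ⟨rfl, hn⟩
    omega
  | succ p ih =>
    intro n k h
    simp only [mmAux]
    rw [ih (n+1) (k-1) (by omega), ih n k (by omega), ih (n-1) (k+1) (by omega)]
    ring

lemma multiset_esymm_cons {R : Type*} [CommSemiring R] (a : R) (s : Multiset R) (j : ℕ) :
    (a ::ₘ s).esymm (j+1) = s.esymm (j+1) + a * s.esymm j := by
  simp only [Multiset.esymm, Multiset.powersetCard_cons, Multiset.map_add, Multiset.sum_add,
    Multiset.map_map, Function.comp_def, Multiset.prod_cons]
  rw [Multiset.sum_map_mul_left]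

lemma rename_castSucc_esymm (s m : ℕ) :
    rename (Fin.castSucc : Fin s → Fin (s+1)) (esymm (Fin s) K m) =
      (((Finset.univ : Finset (Fin s)).val.map Fin.castSucc).map X).esymm m := by
  rw [Multiset.map_map]
  have h1 : rename (Fin.castSucc : Fin s → Fin (s+1)) (esymm (Fin s) K m)
      = aeval (fun i : Fin s => (X (Fin.castSucc i) : MvPolynomial (Fin (s+1)) K))
        (esymm (Fin s) K m) := by
    have : (rename (Fin.castSucc : Fin s → Fin (s+1)) :
        MvPolynomial (Fin s) K →ₐ[K] MvPolynomial (Fin (s+1)) K)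
        = aeval (fun i : Fin s => (X (Fin.castSucc i) : MvPolynomial (Fin (s+1)) K)) := by
      apply MvPolynomial.algHom_ext
      intro i
      simp
    exact congrFun (congrArg DFunLike.coe this) _
  rw [h1, aeval_esymm_eq_multiset_esymm]
  rfl

lemma esymm_split (s j : ℕ) :
    esymm (Fin (s+1)) K (j+1) =
      rename (Fin.castSucc : Fin s → Fin (s+1)) (esymm (Fin s) K (j+1))
        + X (Fin.last s) * rename (Fin.castSucc : Fin s → Fin (s+1)) (esymm (Fin s) K j) := by
  rw [rename_castSucc_esymm, rename_castSucc_esymm]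
  have h0 : esymm (Fin (s+1)) K (j+1)
      = ((Finset.univ : Finset (Fin (s+1))).val.map X).esymm (j+1) :=
    congrFun (esymm_eq_multiset_esymm (Fin (s+1)) K) (j+1)
  rw [h0, Fin.univ_castSuccEmb]
  rw [Finset.cons_val, Finset.map_val, Multiset.map_cons, multiset_esymm_cons]
  rfl

lemma esymm_top_zero (s : ℕ) : esymm (Fin s) K (s+1) = 0 := by
  rw [esymm]
  rw [Finset.powersetCard_eq_empty.2 (by simp)]
  simp

lemma esymm_totalDegree_le (s j : ℕ) : (esymm (Fin s) K j).totalDegree ≤ j := by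
  rw [esymm]
  refine (totalDegree_finset_sum _ _).trans (Finset.sup_le fun t ht => ?_)
  refine (totalDegree_finset_prod _ _).trans ?_
  have := (Finset.mem_powersetCard.mp ht).2
  calc ∑ i ∈ t, (X i : MvPolynomial (Fin s) K).totalDegree
      = ∑ i ∈ t, 1 := by simp [totalDegree_X]
    _ ≤ j := by simp [this]

end Aux

/-- The abstract coefficients `r^{[s]}_{n,k} ∈ K[t_0,…,t_s]` of the 3+2s term recurrence
relations (here `r (s+1) = r^{[s]}`, with `r 0 = r^{[-1]}` the constants), defined by
`r^{[-1]}_{n,k} = [k = 0 ∧ n ≥ 0]` and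
`r^{[s]}_{n,k} = A_n r^{[s-1]}_{n+1,k-1} + (B_n - t_s) r^{[s-1]}_{n,k} + C_n r^{[s-1]}_{n-1,k+1}`
(with `K[t_0,…,t_{s-1}] ⊆ K[t_0,…,t_s]` via `rename Fin.castSucc`), are:
(i) symmetric in `t_0,…,t_s`; (ii) zero when `|k| > s+1` or `n+k < 0`;
(iii) of total degree at most `s+1-|k|` when `|k| ≤ s+1`. -/
theorem recurrence_coefficients_symmetric {K : Type*} [Field K]
    (A B C : ℤ → K) (hA : A (-1) = 0)
    (r : (m : ℕ) → ℤ → ℤ → MvPolynomial (Fin m) K)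
    (hr0 : ∀ (n k : ℤ), r 0 n k = if k = 0 ∧ 0 ≤ n then 1 else 0)
    (hrs : ∀ (s : ℕ) (n k : ℤ), r (s + 1) n k =
      MvPolynomial.C (A n) * rename Fin.castSucc (r s (n + 1) (k - 1))
        + (MvPolynomial.C (B n) - X (Fin.last s)) * rename Fin.castSucc (r s n k)
        + MvPolynomial.C (C n) * rename Fin.castSucc (r s (n - 1) (k + 1))) :
    ∀ (s : ℕ) (n k : ℤ),
      (r (s + 1) n k).IsSymmetric
      ∧ ((s + 1 < k.natAbs ∨ n + k < 0) → r (s + 1) n k = 0)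
      ∧ (k.natAbs ≤ s + 1 → (r (s + 1) n k).totalDegree ≤ s + 1 - k.natAbs) := by
  have key : ∀ (s : ℕ) (n k : ℤ), r (s+1) n k =
      ∑ j ∈ Finset.range (s+2),
        MvPolynomial.C ((-1)^j * mmAux A B C (s+1-j) n k) * esymm (Fin (s+1)) K j := by
    intro s
    induction s with
    | zero =>
      intro n k
      rw [hrs, hr0, hr0, hr0]
      have hco : ∀ (P : Prop) [Decidable P],
          ((if P then 1 else 0 : MvPolynomial (Fin 0) K))
            = MvPolynomial.C (if P then (1:K) else 0) := by
        intro P _; split <;> simp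
      rw [hco, hco, hco, rename_C, rename_C, rename_C]
      rw [Finset.sum_range_succ, Finset.sum_range_succ, Finset.sum_range_zero]
      have h1 : esymm (Fin 1) K 1 = X 0 := by
        rw [esymm_one, Fin.sum_univ_one]
      rw [h1, esymm_zero]
      have hl : (X (Fin.last 0) : MvPolynomial (Fin 1) K) = X 0 := rfl
      simp only [Nat.zero_add, Nat.sub_self, Nat.sub_zero, zero_add, mmAux, hl,
        pow_zero, pow_one, map_mul, map_add, map_one, map_neg, one_mul, neg_mul, mul_one]
      ring
    | succ s ih =>
      intro n k
      set E : ℕ → MvPolynomial (Fin (s+2)) K :=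
        fun j => rename (Fin.castSucc : Fin (s+1) → Fin (s+2)) (esymm (Fin (s+1)) K j) with hE
      have hren : ∀ (f : ℕ → K),
          rename (Fin.castSucc : Fin (s+1) → Fin (s+2))
            (∑ j ∈ Finset.range (s+2), MvPolynomial.C (f j) * esymm (Fin (s+1)) K j)
          = ∑ j ∈ Finset.range (s+2), MvPolynomial.C (f j) * E j := by
        intro f
        rw [map_sum]
        refine Finset.sum_congr rfl fun j _ => ?_
        rw [map_mul, rename_C]
      rw [hrs, ih, ih, ih, hren, hren, hren]
      set S1 := ∑ j ∈ Finset.range (s+2),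
        MvPolynomial.C ((-1)^j * mmAux A B C (s+1-j) (n+1) (k-1)) * E j with hS1
      set S2 := ∑ j ∈ Finset.range (s+2),
        MvPolynomial.C ((-1)^j * mmAux A B C (s+1-j) n k) * E j with hS2
      set S3 := ∑ j ∈ Finset.range (s+2),
        MvPolynomial.C ((-1)^j * mmAux A B C (s+1-j) (n-1) (k+1)) * E j with hS3
      set T := ∑ j ∈ Finset.range (s+2),
        MvPolynomial.C ((-1)^j * mmAux A B C (s+2-j) n k) * E j with hT
      set U := ∑ j ∈ Finset.range (s+2),
        MvPolynomial.C ((-1)^(j+1) * mmAux A B C (s+1-j) n k) * E j with hU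
      have hP : MvPolynomial.C (A n) * S1 + MvPolynomial.C (B n) * S2
          + MvPolynomial.C (C n) * S3 = T := by
        rw [hS1, hS2, hS3, hT, Finset.mul_sum, Finset.mul_sum, Finset.mul_sum,
          ← Finset.sum_add_distrib, ← Finset.sum_add_distrib]
        refine Finset.sum_congr rfl fun j hj => ?_
        have hj' : j ≤ s + 1 := by
          have := Finset.mem_range.mp hj; omega
        have h2 : s + 2 - j = (s + 1 - j) + 1 := by omega
        rw [h2]
        show _ = MvPolynomial.C ((-1)^j * (A n * mmAux A B C (s+1-j) (n+1) (k-1)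
          + B n * mmAux A B C (s+1-j) n k + C n * mmAux A B C (s+1-j) (n-1) (k+1))) * E j
        simp only [map_mul, map_add, map_neg, map_one, map_pow]
        ring
      have hUe : U = -S2 := by
        rw [hU, hS2, ← Finset.sum_neg_distrib]
        refine Finset.sum_congr rfl fun j _ => ?_
        rw [pow_succ]
        simp only [map_mul, map_neg, map_one, map_pow]
        ring
      have hsplit : ∀ j, esymm (Fin (s+2)) K (j+1) = E (j+1) + X (Fin.last (s+1)) * E j :=
        fun j => esymm_split (s+1) j
      have hE0 : E 0 = 1 := by rw [hE]; simp [esymm_zero]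
      have hEtop : E (s+2) = 0 := by
        rw [hE]; simp only [esymm_top_zero]; simp
      have hRHS : ∑ j ∈ Finset.range (s+3),
          MvPolynomial.C ((-1)^j * mmAux A B C (s+2-j) n k) * esymm (Fin (s+2)) K j
          = T + X (Fin.last (s+1)) * U := by
        rw [Finset.sum_range_succ']
        have step1 : ∀ j ∈ Finset.range (s+2),
            MvPolynomial.C ((-1)^(j+1) * mmAux A B C (s+2-(j+1)) n k)
              * esymm (Fin (s+2)) K (j+1)
            = MvPolynomial.C ((-1)^(j+1) * mmAux A B C (s+1-j) n k) * E (j+1)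
              + X (Fin.last (s+1))
                * (MvPolynomial.C ((-1)^(j+1) * mmAux A B C (s+1-j) n k) * E j) := by
          intro j _
          have h2 : s + 2 - (j+1) = s + 1 - j := by omega
          rw [h2, hsplit j]
          ring
        rw [Finset.sum_congr rfl step1, Finset.sum_add_distrib, ← Finset.mul_sum, ← hU]
        have step2 : (∑ j ∈ Finset.range (s+2),
            MvPolynomial.C ((-1)^(j+1) * mmAux A B C (s+1-j) n k) * E (j+1))
            + MvPolynomial.C ((-1)^0 * mmAux A B C (s+2-0) n k) * esymm (Fin (s+2)) K 0
            = T := by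
          have h3 : ∀ j ∈ Finset.range (s+2),
              MvPolynomial.C ((-1)^(j+1) * mmAux A B C (s+1-j) n k) * E (j+1)
              = MvPolynomial.C ((-1)^(j+1) * mmAux A B C (s+2-(j+1)) n k) * E (j+1) := by
            intro j _
            have h5 : s + 1 - j = s + 2 - (j+1) := by omega
            rw [h5]
          rw [Finset.sum_congr rfl h3]
          have h4 : MvPolynomial.C ((-1)^0 * mmAux A B C (s+2-0) n k)
              * esymm (Fin (s+2)) K 0
              = MvPolynomial.C ((-1)^0 * mmAux A B C (s+2-0) n k) * E 0 := by
            rw [hE0, esymm_zero]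
          rw [h4, ← Finset.sum_range_succ' (fun j => MvPolynomial.C ((-1)^j
            * mmAux A B C (s+2-j) n k) * E j) (s+2), Finset.sum_range_succ, hEtop, hT]
          simp
        linear_combination step2
      rw [hRHS]
      linear_combination hP - X (Fin.last (s+1)) * hUe
  intro s n k
  refine ⟨?_, ?_, ?_⟩
  · rw [key]
    exact Finset.sum_induction _ _ (fun a b ha hb => ha.add hb) (IsSymmetric.zero)
      (fun j _ => (IsSymmetric.C _).mul (esymm_isSymmetric _ _ j))
  · intro h
    rw [key]
    refine Finset.sum_eq_zero fun j hj => ?_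
    have : mmAux A B C (s+1-j) n k = 0 := by
      apply mmAux_eq_zero
      omega
    rw [this, mul_zero, map_zero, zero_mul]
  · intro hk
    rw [key]
    refine (totalDegree_finset_sum _ _).trans (Finset.sup_le fun j hj => ?_)
    by_cases hjk : s + 1 - j < k.natAbs
    · rw [mmAux_eq_zero A B C _ _ _ (Or.inl hjk), mul_zero, map_zero, zero_mul]
      simp
    · have hj' : j < s + 2 := Finset.mem_range.mp hj
      have hjle : j ≤ s + 1 - k.natAbs := by omega
      refine le_trans ?_ hjle
      refine (totalDegree_mul _ _).trans ?_
      rw [totalDegree_C]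
      simpa using esymm_totalDegree_le (s+1) j
end

section
/- For every d ∈ ℂ, every s ∈ ℕ, and every symmetric polynomial F ∈ ℂ[t_0,…,t_s] (invariant under all permutations of t_0,…,t_s), there exists a polynomial G ∈ ℂ[x] such that for all t ∈ ℂ: F( t(t+d), (t+1)(t+1+d), …, (t+s)(t+s+d) ) = G( t(t+d+s) ). (Any symmetric polynomial in the Racah sinusoidal coordinates η_d(t), η_d(t+1), …, η_d(t+s) is a polynomial in the parameter-shifted coordinate η_{d+s}(t).) -/
open Polynomial

/-- Coefficient of the composition with `-X`. -/
lemma coeff_comp_neg_X (p : Polynomial ℂ) (n : ℕ) :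
    (p.comp (-X)).coeff n = (-1) ^ n * p.coeff n := by
  induction p using Polynomial.induction_on' with
  | add p q hp hq => simp [add_comp, hp, hq, mul_add]
  | monomial m a =>
    rw [← C_mul_X_pow_eq_monomial, mul_comp, C_comp, pow_comp, X_comp, neg_pow,
      show ((-1 : Polynomial ℂ)) ^ m = C ((-1 : ℂ) ^ m) by simp,
      ← mul_assoc, ← C_mul, coeff_C_mul, coeff_C_mul, coeff_X_pow]
    by_cases hnm : n = m
    · subst hnm; ring
    · simp [hnm]

/-- An even polynomial function is a polynomial in `t ^ 2`. -/
lemma even_poly_exists (p : Polynomial ℂ) (h : ∀ t : ℂ, p.eval (-t) = p.eval t) :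
    ∃ H : Polynomial ℂ, ∀ t : ℂ, p.eval t = H.eval (t ^ 2) := by
  have hcomp : p.comp (-X) = p := by
    apply Polynomial.funext
    intro t
    simp [eval_comp, h t]
  have hodd : ∀ n : ℕ, ¬ (2 ∣ n) → p.coeff n = 0 := by
    intro n hn
    have := coeff_comp_neg_X p n
    rw [hcomp] at this
    have hneg : ((-1 : ℂ)) ^ n = -1 := Odd.neg_one_pow (Nat.odd_iff.mpr (by omega))
    rw [hneg] at this
    linear_combination (1/2 : ℂ) * this
  refine ⟨p.contract 2, fun t => ?_⟩
  have hexp : Polynomial.expand ℂ 2 (p.contract 2) = p := by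
    ext n
    rw [coeff_expand (by norm_num)]
    by_cases h2 : 2 ∣ n
    · simp [h2, coeff_contract (two_ne_zero), Nat.div_mul_cancel h2]
    · simp [h2, (hodd n h2).symm]
  conv_lhs => rw [← hexp]
  rw [expand_eval]

/-- A polynomial invariant under `t ↦ -t - c` is a polynomial in `t * (t + c)`. -/
lemma reflect_poly_exists (c : ℂ) (p : Polynomial ℂ)
    (h : ∀ t : ℂ, p.eval (-t - c) = p.eval t) :
    ∃ G : Polynomial ℂ, ∀ t : ℂ, p.eval t = G.eval (t * (t + c)) := by
  set q : Polynomial ℂ := p.comp (X - C (c / 2)) with hq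
  have hqeval : ∀ u : ℂ, q.eval u = p.eval (u - c / 2) := by
    intro u; simp [hq, eval_comp]
  have hqeven : ∀ u : ℂ, q.eval (-u) = q.eval u := by
    intro u
    rw [hqeval, hqeval]
    have : -u - c / 2 = -(u - c / 2) - c := by ring
    rw [this, h]
  obtain ⟨H, hH⟩ := even_poly_exists q hqeven
  refine ⟨H.comp (X + C (c ^ 2 / 4)), fun t => ?_⟩
  have h1 : p.eval t = q.eval (t + c / 2) := by rw [hqeval]; ring_nf
  rw [h1, hH, eval_comp]
  simp only [eval_add, eval_X, eval_C]
  congr 1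
  ring

/-- Any symmetric polynomial in the Racah sinusoidal coordinates
`η_d(t), η_d(t+1), …, η_d(t+s)` (where `η_e(t) = t(t+e)`) is a polynomial in the
parameter-shifted coordinate `η_{d+s}(t) = t(t+d+s)`. -/
theorem racah_symmetric_poly_in_shifted_eta (d : ℂ) (s : ℕ)
    (F : MvPolynomial (Fin (s + 1)) ℂ) (hF : F.IsSymmetric) :
    ∃ G : Polynomial ℂ, ∀ t : ℂ,
      MvPolynomial.eval
          (fun j : Fin (s + 1) => (t + ((j : ℕ) : ℂ)) * (t + ((j : ℕ) : ℂ) + d)) F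
        = G.eval (t * (t + d + (s : ℂ))) := by
  set c : ℂ := d + (s : ℂ) with hc
  -- the univariate polynomial obtained by substituting the η's
  set p : Polynomial ℂ := MvPolynomial.aeval
      (fun j : Fin (s + 1) => (X + C ((j : ℕ) : ℂ)) * (X + C ((j : ℕ) : ℂ) + C d)) F with hp
  have hpe : ∀ t : ℂ, p.eval t
      = MvPolynomial.eval (fun j : Fin (s + 1) =>
          (t + ((j : ℕ) : ℂ)) * (t + ((j : ℕ) : ℂ) + d)) F := by
    intro t
    have := congrFun (congrArg (fun φ : MvPolynomial (Fin (s+1)) ℂ →ₐ[ℂ] ℂ => φ.toFun)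
      (MvPolynomial.comp_aeval
        (φ := (Polynomial.aeval t : Polynomial ℂ →ₐ[ℂ] ℂ))
        (f := fun j : Fin (s + 1) =>
          (X + C ((j : ℕ) : ℂ)) * (X + C ((j : ℕ) : ℂ) + C d)))) F
    simp only [AlgHom.toFun_eq_coe, AlgHom.coe_comp, Function.comp_apply] at this
    rw [hp]
    show (Polynomial.aeval t) (MvPolynomial.aeval _ F) = _
    rw [this]
    have hfun : (fun j : Fin (s + 1) =>
        (Polynomial.aeval t) ((X + C ((j : ℕ) : ℂ)) * (X + C ((j : ℕ) : ℂ) + C d)))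
        = fun j : Fin (s + 1) => (t + ((j : ℕ) : ℂ)) * (t + ((j : ℕ) : ℂ) + d) := by
      funext j; simp
    rw [hfun]
    rfl
  have hrefl : ∀ t : ℂ, p.eval (-t - c) = p.eval t := by
    intro t
    rw [hpe, hpe]
    have hrename := hF (Fin.revPerm : Equiv.Perm (Fin (s + 1)))
    conv_rhs => rw [← hrename, MvPolynomial.eval_rename]
    have hfun : (fun j : Fin (s + 1) =>
        (-t - c + ((j : ℕ) : ℂ)) * (-t - c + ((j : ℕ) : ℂ) + d))
        = (fun j : Fin (s + 1) => (t + ((j : ℕ) : ℂ)) * (t + ((j : ℕ) : ℂ) + d))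
          ∘ (Fin.revPerm : Equiv.Perm (Fin (s + 1))) := by
      funext j
      simp only [Function.comp_apply, Fin.revPerm_apply]
      have hjle : (j : ℕ) ≤ s := Nat.lt_succ_iff.mp j.isLt
      have hrev : ((Fin.rev j : Fin (s+1)) : ℕ) = s - (j : ℕ) := by
        simp only [Fin.val_rev]; omega
      rw [hrev]
      have hcast : ((s - (j : ℕ) : ℕ) : ℂ) = (s : ℂ) - ((j : ℕ) : ℂ) := by
        rw [Nat.cast_sub hjle]
      rw [hcast, hc]
      ring
    rw [hfun]
  obtain ⟨G, hG⟩ := reflect_poly_exists c p hrefl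
  refine ⟨G, fun t => ?_⟩
  rw [← hpe, hG, hc]
  ring_nf
end

section
/- Ordering of the roots α_j of the generalized closure relation, q-Racah case (formula (4.14)): let L ≥ 1 be an integer, 0 < q < 1, and d̃ a real number with 0 < d̃ < q^{2L−1}. For z ≥ 0 define α_j(z) = ½[ (q^{−(L+1−j)/2} − q^{(L+1−j)/2})²·(z+1+d̃) + (q^{−(L+1−j)} − q^{L+1−j})·√((z+1+d̃)² − 4d̃) ] for 1 ≤ j ≤ L, and α_j(z) = ½[ (q^{−(j−L)/2} − q^{(j−L)/2})²·(z+1+d̃) − (q^{−(j−L)} − q^{j−L})·√((z+1+d̃)² − 4d̃) ] for L+1 ≤ j ≤ 2L. Then for every z ≥ 0: α_1(z) > α_2(z) > ⋯ > α_L(z) > 0 > α_{L+1}(z) > ⋯ > α_{2L}(z). (Note (z+1+d̃)² − 4d̃ ≥ 0 for all z ≥ 0 since d̃ > 0.) -/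
section QRacahHelpers

private lemma rpowmul (q : ℝ) (hq : 0 < q) (t : ℝ) : q ^ (-t) * q ^ t = 1 := by
  rw [← Real.rpow_add hq]; simp

private lemma sq_diff (q : ℝ) (hq : 0 < q) (t : ℝ) :
    (q ^ (-(t/2)) - q ^ (t/2))^2 = q ^ (-t) + q ^ t - 2 := by
  have h1 : q ^ (-(t/2)) * q ^ (t/2) = 1 := rpowmul q hq (t/2)
  have h2 : q ^ (-(t/2)) * q ^ (-(t/2)) = q ^ (-t) := by
    rw [← Real.rpow_add hq]; congr 1; ring
  have h3 : q ^ (t/2) * q ^ (t/2) = q ^ t := by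
    rw [← Real.rpow_add hq]; congr 1; ring
  nlinarith [h1, h2, h3]

private lemma key_lemma (dt s r P : ℝ) (hdt0 : 0 < dt) (hP0 : 0 < P) (hPdt : P * dt < 1)
    (hr2 : r^2 = s^2 - 4*dt) (hsr2 : 2 ≤ s + r) (hrs : r < s) :
    (s - r) * P < s + r := by
  have h1 : (s - r) * (s + r) = 4 * dt := by nlinarith [hr2]
  have h2 : (s - r) * P * (s + r) = 4 * dt * P := by
    calc (s - r) * P * (s + r) = ((s - r) * (s + r)) * P := by ring
    _ = 4 * dt * P := by rw [h1]
  nlinarith [h2, hPdt, hsr2, hdt0, hP0]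

private lemma step1 (s r a b a' b' : ℝ) (hr : 0 < r) (hrs : r < s)
    (hab : a * b = 1) (hab' : a' * b' = 1) (ha : 1 ≤ a) (haa' : a < a')
    (hb : 0 < b) (hb' : 0 < b') :
    (1/2)*((a + b - 2)*s + (a - b)*r) < (1/2)*((a' + b' - 2)*s + (a' - b')*r) := by
  have hb1 : b ≤ 1 := by nlinarith
  have hb'1 : b' ≤ 1 := by nlinarith
  have hε : b - b' = (a' - a) * (b * b') := by
    calc b - b' = b * (a' * b') - (a * b) * b' := by rw [hab, hab']; ring
    _ = (a' - a) * (b * b') := by ring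
  have h3 : 0 < (a' - a) * ((1 - b*b')*s + (1 + b*b')*r) := by
    apply mul_pos (by linarith)
    have hbb : b * b' ≤ 1 := by nlinarith
    nlinarith [mul_pos hb hb']
  nlinarith [h3, hε, hrs]

private lemma step2 (s r a b a' b' : ℝ) (hr : 0 < r) (hrs : r < s)
    (hab : a * b = 1) (hab' : a' * b' = 1) (ha : 1 ≤ a) (haa' : a < a')
    (hb : 0 < b) (hb' : 0 < b')
    (hkey : (s - r) * (a * a') < s + r) :
    (1/2)*((a' + b' - 2)*s - (a' - b')*r) < (1/2)*((a + b - 2)*s - (a - b)*r) := by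
  have hε : b - b' = (a' - a) * (b * b') := by
    calc b - b' = b * (a' * b') - (a * b) * b' := by rw [hab, hab']; ring
    _ = (a' - a) * (b * b') := by ring
  have haa0 : 0 < a * a' := by nlinarith
  have h6 : (a * a') * ((b*b' - 1)*s + (1 + b*b')*r) = (s + r) - (s - r)*(a*a') := by
    linear_combination (a'*b'*(s+r))*hab + (s+r)*hab'
  have h5 : 0 < (b*b' - 1)*s + (1 + b*b')*r := by nlinarith [h6, haa0, hkey]
  have h4 : 0 < (a' - a) * ((b*b' - 1)*s + (1 + b*b')*r) := mul_pos (by linarith) h5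
  nlinarith [h4, hε]

private lemma pos_step (s r a b : ℝ) (hs : 0 < s) (hr : 0 < r) (hab : a * b = 1)
    (ha : 1 < a) (hb : 0 < b) :
    0 < (1/2)*((a + b - 2)*s + (a - b)*r) := by
  have hb1 : b < 1 := by nlinarith
  nlinarith [mul_pos (mul_pos (show (0:ℝ) < a - 1 by linarith) (show (0:ℝ) < 1 - b by linarith)) hs,
    mul_pos (show (0:ℝ) < a - b by linarith) hr, hab, hs, hr]

private lemma neg_lemma (dt s r q : ℝ) (hq : 0 < q) (hq1 : q < 1) (hdtq : dt < q) (hdt0 : 0 < dt)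
    (hs : 1 + dt ≤ s) (hr2 : r^2 = s^2 - 4*dt) (hr0 : 0 ≤ r) :
    (1/2)*((q⁻¹ + q - 2)*s - (q⁻¹ - q)*r) < 0 := by
  have hdt1 : dt < 1 := by linarith
  have hs0 : 0 < s := by linarith
  have hss : (1+dt)^2 ≤ s^2 := by nlinarith
  have hqd : q * dt < 1 := by nlinarith [mul_lt_mul_of_pos_left hdt1 hq]
  have hkey : 0 < (q - dt) * (1 - q*dt) := mul_pos (by linarith) (by linarith)
  have h1 : ((1-q)*s)^2 < ((1+q)*r)^2 := by
    have hr2q : ((1+q)*r)^2 = (1+q)^2*(s^2-4*dt) := by rw [mul_pow, hr2]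
    nlinarith [hr2q, hkey, mul_le_mul_of_nonneg_left hss hq.le]
  have h2 : (1-q)*s < (1+q)*r :=
    lt_of_pow_lt_pow_left₀ 2 (by positivity) h1
  have hinv : q * q⁻¹ = 1 := mul_inv_cancel₀ (ne_of_gt hq)
  nlinarith [mul_lt_mul_of_pos_left h2 (show (0:ℝ) < 1 - q by linarith), hinv, hs0, hr0, hq,
    mul_pos hq hs0]

end QRacahHelpers

/-- Ordering of the roots `α_j` of the generalized closure relation (formula (4.14),
q-Racah case): for `0 < q < 1`, `0 < d̃ < q^{2L-1}` and `z ≥ 0`,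
`α_1(z) > α_2(z) > ⋯ > α_L(z) > 0 > α_{L+1}(z) > ⋯ > α_{2L}(z)`, where for `1 ≤ j ≤ L`
`α_j(z) = ½[(q^{-(L+1-j)/2} - q^{(L+1-j)/2})²(z+1+d̃)
          + (q^{-(L+1-j)} - q^{L+1-j})√((z+1+d̃)² - 4d̃)]`
and for `L+1 ≤ j ≤ 2L`
`α_j(z) = ½[(q^{-(j-L)/2} - q^{(j-L)/2})²(z+1+d̃)
          - (q^{-(j-L)} - q^{j-L})√((z+1+d̃)² - 4d̃)]`. -/
theorem qracah_alpha_ordering (L : ℕ) (hL : 1 ≤ L) (q : ℝ) (hq : 0 < q) (hq1 : q < 1)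
    (dt : ℝ) (hdt0 : 0 < dt) (hdt : dt < q ^ (2 * L - 1))
    (α : ℕ → ℝ → ℝ)
    (hα1 : ∀ j : ℕ, 1 ≤ j → j ≤ L → ∀ z : ℝ, 0 ≤ z →
      α j z = (1 / 2) *
        ((q ^ (-(((L : ℝ) + 1 - (j : ℝ)) / 2)) - q ^ (((L : ℝ) + 1 - (j : ℝ)) / 2)) ^ 2
            * (z + 1 + dt)
          + (q ^ (-((L : ℝ) + 1 - (j : ℝ))) - q ^ ((L : ℝ) + 1 - (j : ℝ)))
            * Real.sqrt ((z + 1 + dt) ^ 2 - 4 * dt)))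
    (hα2 : ∀ j : ℕ, L + 1 ≤ j → j ≤ 2 * L → ∀ z : ℝ, 0 ≤ z →
      α j z = (1 / 2) *
        ((q ^ (-(((j : ℝ) - (L : ℝ)) / 2)) - q ^ (((j : ℝ) - (L : ℝ)) / 2)) ^ 2
            * (z + 1 + dt)
          - (q ^ (-((j : ℝ) - (L : ℝ))) - q ^ ((j : ℝ) - (L : ℝ)))
            * Real.sqrt ((z + 1 + dt) ^ 2 - 4 * dt))) :
    ∀ z : ℝ, 0 ≤ z →
      (∀ j : ℕ, 1 ≤ j → j < 2 * L → α (j + 1) z < α j z) ∧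
      0 < α L z ∧ α (L + 1) z < 0 := by
  intro z hz
  have hdt1 : dt < 1 := lt_of_lt_of_le hdt (pow_le_one₀ hq.le hq1.le)
  have hdtq : dt < q := by
    have := pow_le_pow_of_le_one hq.le hq1.le (show 1 ≤ 2*L-1 by omega)
    rw [pow_one] at this
    exact lt_of_lt_of_le hdt this
  set s := z + 1 + dt with hsdef
  have hs1 : 1 + dt ≤ s := by simp only [hsdef]; linarith
  have hs0 : 0 < s := by linarith
  set r := Real.sqrt (s^2 - 4*dt) with hrdef
  have hDpos : 0 < s^2 - 4*dt := by nlinarith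
  have hr2 : r^2 = s^2 - 4*dt := Real.sq_sqrt hDpos.le
  have hr0 : 0 ≤ r := Real.sqrt_nonneg _
  have hrpos : 0 < r := Real.sqrt_pos.mpr hDpos
  have hrs : r < s := by nlinarith
  have hr1 : 1 - dt ≤ r := by
    have h := Real.sqrt_le_sqrt (show (1-dt)^2 ≤ s^2 - 4*dt by nlinarith)
    rwa [Real.sqrt_sq (by linarith)] at h
  have hsr2 : 2 ≤ s + r := by linarith
  -- positivity of α L
  have hpos : 0 < α L z := by
    rw [hα1 L hL le_rfl z hz, sq_diff q hq]
    exact pos_step s r _ _ hs0 hrpos (rpowmul q hq _)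
      ((Real.one_lt_rpow_iff_of_pos hq).mpr (Or.inr ⟨hq1, by norm_num⟩))
      (Real.rpow_pos_of_pos hq _)
  -- negativity of α (L+1)
  have hneg : α (L + 1) z < 0 := by
    rw [hα2 (L+1) le_rfl (by omega) z hz, sq_diff q hq]
    have he : ((L+1 : ℕ) : ℝ) - (L : ℝ) = 1 := by push_cast; ring
    have hb : q ^ (((L+1 : ℕ) : ℝ) - (L : ℝ)) = q := by rw [he, Real.rpow_one]
    have hbn : q ^ (-(((L+1 : ℕ) : ℝ) - (L : ℝ))) = q⁻¹ := by
      rw [Real.rpow_neg hq.le, hb]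
    rw [hb, hbn]
    exact neg_lemma dt s r q hq hq1 hdtq hdt0 hs1 hr2 hr0
  refine ⟨?_, hpos, hneg⟩
  intro j hj1 hj2
  by_cases hA : j + 1 ≤ L
  · -- both indices in the first range
    have hjL : (j : ℝ) + 1 ≤ (L : ℝ) := by exact_mod_cast hA
    rw [hα1 j hj1 (by omega) z hz, hα1 (j+1) (by omega) hA z hz,
      sq_diff q hq, sq_diff q hq]
    apply step1 s r _ _ _ _ hrpos hrs (rpowmul q hq _) (rpowmul q hq _)
    · exact Real.one_le_rpow_of_pos_of_le_one_of_nonpos hq hq1.le (by push_cast; linarith)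
    · exact Real.rpow_lt_rpow_of_exponent_gt hq hq1 (by push_cast; linarith)
    · exact Real.rpow_pos_of_pos hq _
    · exact Real.rpow_pos_of_pos hq _
  · by_cases hB : j = L
    · subst hB; linarith
    · -- both indices in the second range
      have hC : L + 1 ≤ j := by omega
      have hjL : (L : ℝ) + 1 ≤ (j : ℝ) := by exact_mod_cast hC
      have hj2L : (j : ℝ) + 1 ≤ 2 * (L : ℝ) := by exact_mod_cast (show j + 1 ≤ 2*L by omega)
      rw [hα2 j hC (by omega) z hz, hα2 (j+1) (by omega) (by omega) z hz,
        sq_diff q hq, sq_diff q hq]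
      apply step2 s r _ _ _ _ hrpos hrs (rpowmul q hq _) (rpowmul q hq _)
        (Real.one_le_rpow_of_pos_of_le_one_of_nonpos hq hq1.le (by push_cast; linarith))
        (Real.rpow_lt_rpow_of_exponent_gt hq hq1 (by push_cast; linarith))
        (Real.rpow_pos_of_pos hq _) (Real.rpow_pos_of_pos hq _)
      -- the key inequality
      have haa : q ^ (-((j : ℝ) - (L : ℝ))) * q ^ (-(((j+1 : ℕ) : ℝ) - (L : ℝ)))
          = q ^ ((-((j : ℝ) - (L : ℝ))) + (-(((j+1 : ℕ) : ℝ) - (L : ℝ)))) :=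
        (Real.rpow_add hq _ _).symm
      have hle : q ^ ((-((j : ℝ) - (L : ℝ))) + (-(((j+1 : ℕ) : ℝ) - (L : ℝ))))
          ≤ q ^ (-(2*(L : ℝ) - 1)) :=
        Real.rpow_le_rpow_of_exponent_ge hq hq1.le (by push_cast; linarith)
      have hcast : ((2*L - 1 : ℕ) : ℝ) = 2*(L : ℝ) - 1 := by
        rw [Nat.cast_sub (by omega : 1 ≤ 2*L)]; push_cast; ring
      have hpowpos : 0 < q ^ (2*L - 1) := pow_pos hq _
      have h2L : q ^ (-(2*(L : ℝ) - 1)) * dt < 1 := by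
        have heq : q ^ (-(2*(L : ℝ) - 1)) = (q ^ (2*L - 1 : ℕ))⁻¹ := by
          rw [Real.rpow_neg hq.le]
          congr 1
          rw [← Real.rpow_natCast q (2*L - 1), hcast]
        rw [heq]
        have h1 := mul_lt_mul_of_pos_left hdt (inv_pos.mpr hpowpos)
        have h2 : (q ^ (2*L - 1 : ℕ))⁻¹ * q ^ (2*L - 1 : ℕ) = 1 :=
          inv_mul_cancel₀ (ne_of_gt hpowpos)
        linarith
      have hPdt : (q ^ (-((j : ℝ) - (L : ℝ))) * q ^ (-(((j+1 : ℕ) : ℝ) - (L : ℝ)))) * dt < 1 := by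
        rw [haa]
        calc q ^ ((-((j : ℝ) - (L : ℝ))) + (-(((j+1 : ℕ) : ℝ) - (L : ℝ)))) * dt
            ≤ q ^ (-(2*(L : ℝ) - 1)) * dt := mul_le_mul_of_nonneg_right hle hdt0.le
          _ < 1 := h2L
      exact key_lemma dt s r _ hdt0
        (mul_pos (Real.rpow_pos_of_pos hq _) (Real.rpow_pos_of_pos hq _)) hPdt hr2 hsr2 hrs
  done
end
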